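/- No strictly increasing ω-sequence of subTuring degrees has a supremum: if (g_n) is a sequence of partial functions with g_n <subT g_{n+1} for all n, and h is any upper bound (g_n ≤subT h for all n), then there exists a partial function f such that g_n ≤subT f for all n but h is not subTuring reducible to f. -/

import Mathlib

open Classical

noncomputable section

/-- `as` is a valid answer history for the sequential oracle computation of `Φ`
with oracle `g` on input `n`: at each round `k`, the machine outputs a query
`(false, q)` with `q` in the domain of `g`, answered by `g q = as[k]`. -/
def ValidHist (Φ : List ℕ →. Bool × ℕ) (g : ℕ →. ℕ) (n : ℕ) (as : List ℕ) : Prop :=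
  ∀ (k : ℕ) (hk : k < as.length), ∃ q : ℕ,
    (false, q) ∈ Φ (n :: as.take k) ∧ (as[k]'hk) ∈ g q

/-- The sequential oracle computation `Φ[g](n)` halts with output `m`. -/
def HaltsTo (Φ : List ℕ →. Bool × ℕ) (g : ℕ →. ℕ) (n m : ℕ) : Prop :=
  ∃ as : List ℕ, ValidHist Φ g n as ∧ (true, m) ∈ Φ (n :: as)

/-- subTuring reducibility: `f ⊆ Φ[g]` for some partial computable `Φ`. -/
def SubTuringLE (f g : ℕ →. ℕ) : Prop :=
  ∃ Φ : List ℕ →. Bool × ℕ, Partrec Φ ∧ ∀ n m, m ∈ f n → HaltsTo Φ g n m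

/-- subTuring equivalence. -/
def SubTuringEquiv (f g : ℕ →. ℕ) : Prop := SubTuringLE f g ∧ SubTuringLE g f

/-!
Let `f` answer `g i x` on `⟪⟪p, i⟫, x⟫` exactly when `p` is the password chosen for column `i`;
each `g i` reduces to `f` by a single query. The passwords are chosen column by column so that the
`e`-th machine `Φ` does not compute `h` from `f`. At stage `e` the columns `i < e` have their
passwords, and the later ones are only promised passwords above a bound `t`. If `Φ` fails to
compute `h` from the largest oracle compatible with this, it fails from `f` as well. Otherwise,
as the columns `i < e` reduce to `g e` and `g (e + 1) ≤ h` but `g (e + 1) ≰ g e`, some halting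
computation of `Φ` needs a query to a column `i ≥ e` under a password `p > t`. Taking `p + 1` as
the password of column `e` and as the new bound excludes that query, and since oracle computations
are deterministic, the computation then cannot halt at all.
-/

theorem PFun.fix_eq_of_reflTransGen {α β : Type*} {f : α →. β ⊕ α} {a a' : α}
    (h : Relation.ReflTransGen (fun a a' => Sum.inr a' ∈ f a) a a') : f.fix a = f.fix a' := by
  induction h with
  | refl => rfl
  | tail _ hstep ih => exact ih.trans (PFun.fix_fwd_eq hstep)

section Histories

variable {Φ : List ℕ →. Bool × ℕ} {G G' : ℕ →. ℕ} {n m : ℕ} {as bs : List ℕ}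

theorem validHist_append_iff :
    ValidHist Φ G n (as ++ bs) ↔ ValidHist Φ G n as ∧
      ∀ (i : ℕ) (hi : i < bs.length),
        ∃ q, (false, q) ∈ Φ (n :: (as ++ bs.take i)) ∧ bs[i] ∈ G q := by
  constructor
  · intro hv
    refine ⟨fun k hk => ?_, fun i hi => ?_⟩
    · obtain ⟨q, hq, ha⟩ := hv k (by simp; omega)
      refine ⟨q, by simpa [List.take_append, Nat.sub_eq_zero_of_le hk.le] using hq, ?_⟩
      rwa [List.getElem_append_left hk] at ha
    · obtain ⟨q, hq, ha⟩ := hv (as.length + i) (by simp; omega)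
      refine ⟨q, by simpa [List.take_append, List.take_of_length_le] using hq, ?_⟩
      simpa using ha
  · rintro ⟨hv, hbs⟩ k hk
    rcases Nat.lt_or_ge k as.length with hk' | hk'
    · obtain ⟨q, hq, ha⟩ := hv k hk'
      refine ⟨q, by simpa [List.take_append, Nat.sub_eq_zero_of_le hk'.le] using hq, ?_⟩
      rwa [List.getElem_append_left hk']
    · obtain ⟨q, hq, ha⟩ := hbs (k - as.length) (by simp at hk; omega)
      refine ⟨q, by simpa [List.take_append, List.take_of_length_le hk'] using hq, ?_⟩
      rwa [List.getElem_append_right hk']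

theorem ValidHist.take (hv : ValidHist Φ G n as) (k : ℕ) : ValidHist Φ G n (as.take k) :=
  (validHist_append_iff.1 (by rwa [List.take_append_drop])).1

theorem ValidHist.mono (hG : ∀ q, G q ≤ G' q) (hv : ValidHist Φ G n as) : ValidHist Φ G' n as :=
  fun k hk => let ⟨q, hq, ha⟩ := hv k hk; ⟨q, hq, hG q _ ha⟩

theorem HaltsTo.mono (hG : ∀ q, G q ≤ G' q) : HaltsTo Φ G n m → HaltsTo Φ G' n m :=
  fun ⟨as, hv, hm⟩ => ⟨as, hv.mono hG, hm⟩

theorem ValidHist.take_eq (hv : ValidHist Φ G n as) (hv' : ValidHist Φ G n bs) :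
    ∀ k, k ≤ as.length → k ≤ bs.length → as.take k = bs.take k := by
  intro k
  induction k with
  | zero => simp
  | succ k ih =>
    intro hk hk'
    have ht := ih (by omega) (by omega)
    obtain ⟨q, hq, ha⟩ := hv k hk
    obtain ⟨q', hq', ha'⟩ := hv' k hk'
    rw [ht] at hq
    obtain rfl : q = q' := congrArg Prod.snd (Part.mem_unique hq hq')
    rw [List.take_add_one, List.take_add_one, ht, List.getElem?_eq_getElem hk,
      List.getElem?_eq_getElem hk', Part.mem_unique ha ha']

theorem ValidHist.length_le_of_halts (hv : ValidHist Φ G n as) (hv' : ValidHist Φ G n bs)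
    (hm : (true, m) ∈ Φ (n :: bs)) : as.length ≤ bs.length := by
  by_contra! hlt
  obtain ⟨q, hq, -⟩ := hv bs.length hlt
  rw [hv.take_eq hv' _ hlt.le le_rfl, List.take_length] at hq
  simpa using Part.mem_unique hq hm

theorem ValidHist.eq_of_halts {m' : ℕ} (hv : ValidHist Φ G n as) (hv' : ValidHist Φ G n bs)
    (hm : (true, m) ∈ Φ (n :: as)) (hm' : (true, m') ∈ Φ (n :: bs)) : as = bs := by
  have hlen := le_antisymm (hv.length_le_of_halts hv' hm') (hv'.length_le_of_halts hv hm)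
  have h := hv.take_eq hv' as.length le_rfl hlen.le
  rwa [List.take_length, hlen, List.take_length] at h

theorem not_haltsTo_of_query_notMem (hG : ∀ q, G' q ≤ G q) (hv : ValidHist Φ G n as)
    (hm : (true, m) ∈ Φ (n :: as)) {j q : ℕ} (hj : j < as.length)
    (hq : (false, q) ∈ Φ (n :: as.take j)) (hdom : G' q = Part.none) (m' : ℕ) :
    ¬ HaltsTo Φ G' n m' := by
  rintro ⟨bs, hv', hm'⟩
  obtain rfl := hv.eq_of_halts (hv'.mono hG) hm hm'
  obtain ⟨q', hq', ha⟩ := hv' j hj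
  obtain rfl : q' = q := congrArg Prod.snd (Part.mem_unique hq' hq)
  simp [hdom] at ha

end Histories

/-- `h ⊆ Φ[G]`. -/
def Computes (Φ : List ℕ →. Bool × ℕ) (G h : ℕ →. ℕ) : Prop :=
  ∀ n m, m ∈ h n → HaltsTo Φ G n m

theorem Computes.mono {Φ : List ℕ →. Bool × ℕ} {G G' h : ℕ →. ℕ} (hG : ∀ q, G q ≤ G' q)
    (hc : Computes Φ G h) : Computes Φ G' h :=
  fun n m hm => (hc n m hm).mono hG

namespace SubTuringLE

theorem of_le {f f' G : ℕ →. ℕ} (hf : ∀ u, f' u ≤ f u) :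
    SubTuringLE f G → SubTuringLE f' G :=
  fun ⟨Φ, hΦ, hc⟩ => ⟨Φ, hΦ, fun n m hm => hc n m (hf n _ hm)⟩

protected theorem none (G : ℕ →. ℕ) : SubTuringLE (fun _ => Part.none) G :=
  ⟨fun _ => Part.none, Partrec.none, fun _ _ hm => absurd hm (Part.notMem_none _)⟩

def queryMachine (τ : ℕ → ℕ) : List ℕ →. Bool × ℕ
  | [n] => Part.some (false, τ n)
  | [_, a] => Part.some (true, a)
  | _ => Part.none

theorem queryMachine_partrec {τ : ℕ → ℕ} (hτ : Computable τ) : Partrec (queryMachine τ) := by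
  have hlen (k : ℕ) : Computable fun l : List ℕ => decide (l.length = k) :=
    (Primrec.eq.comp Primrec.list_length (Primrec.const k)).decide.to_comp
  have hquery : Computable fun l : List ℕ => some ((false, τ l.headI) : Bool × ℕ) :=
    Computable.option_some.comp
      ((Computable.const false).pair (hτ.comp Primrec.list_headI.to_comp))
  have hanswer : Computable fun l : List ℕ => some ((true, l.tail.headI) : Bool × ℕ) :=
    Computable.option_some.comp
      ((Computable.const true).pair (Primrec.list_headI.comp Primrec.list_tail).to_comp)
  refine (Computable.ofOption (Computable.cond (hlen 1) hquery
    (Computable.cond (hlen 2) hanswer (Computable.const none)))).of_eq fun l => ?_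
  rcases l with _ | ⟨n, _ | ⟨a, _ | ⟨b, l⟩⟩⟩ <;> simp [queryMachine]

theorem of_query {f G : ℕ →. ℕ} (τ : ℕ → ℕ) (hτ : Computable τ)
    (h : ∀ u, f u ≤ G (τ u)) : SubTuringLE f G :=
  ⟨queryMachine τ, queryMachine_partrec hτ, fun n m hm =>
    ⟨[m], fun | 0, _ => ⟨τ n, Part.mem_some _, h n _ hm⟩, Part.mem_some _⟩⟩

protected theorem cond {P : ℕ → Bool} (hP : Computable P) {f₁ f₂ G : ℕ →. ℕ}
    (h₁ : SubTuringLE f₁ G) (h₂ : SubTuringLE f₂ G) :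
    SubTuringLE (fun u => bif P u then f₁ u else f₂ u) G := by
  obtain ⟨Φ₁, hΦ₁, hc₁⟩ := h₁
  obtain ⟨Φ₂, hΦ₂, hc₂⟩ := h₂
  refine ⟨fun l => bif P l.headI then Φ₁ l else Φ₂ l,
    Partrec.cond (hP.comp Primrec.list_headI.to_comp) hΦ₁ hΦ₂, fun n m hm => ?_⟩
  cases hPn : P n with
  | true =>
    obtain ⟨as, hv, he⟩ := hc₁ n m (by simpa [hPn] using hm)
    exact ⟨as, fun k hk => by simpa [hPn] using hv k hk, by simpa [hPn]⟩
  | false =>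
    obtain ⟨as, hv, he⟩ := hc₂ n m (by simpa [hPn] using hm)
    exact ⟨as, fun k hk => by simpa [hPn] using hv k hk, by simpa [hPn]⟩

/-- A state `(n, as, running, (q, bs), rest)` of the composition of `Φ` with `Ψ`: `Φ` runs on
input `n` with answers `as`; while `running`, `Ψ` runs on the query `q` of `Φ` with answers `bs`;
`rest` lists the oracle answers not yet consumed. -/
abbrev ComposeState : Type := ℕ × List ℕ × Bool × (ℕ × List ℕ) × List ℕ

def afterPhi : ComposeState → Bool × ℕ → (Bool × ℕ) ⊕ ComposeState
  | _, (true, m) => .inl (true, m)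
  | (n, as, _, _, rest), (false, q) => .inr (n, as, true, (q, []), rest)

def afterPsi : ComposeState → Bool × ℕ → (Bool × ℕ) ⊕ ComposeState
  | (n, as, _, _, rest), (true, a) => .inr (n, as ++ [a], false, (0, []), rest)
  | (_, _, _, _, []), (false, q) => .inl (false, q)
  | (n, as, _, (q, bs), b :: rest), (false, _) => .inr (n, as, true, (q, bs ++ [b]), rest)

def composeStep (Φ Ψ : List ℕ →. Bool × ℕ) : ComposeState →. (Bool × ℕ) ⊕ ComposeState :=
  fun s => bif s.2.2.1 then (Ψ (s.2.2.2.1.1 :: s.2.2.2.1.2)).map (afterPsi s)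
    else (Φ (s.1 :: s.2.1)).map (afterPhi s)

/-- On `n :: as` the composed machine replays the simulation, feeding the answers `as` to the
queries of `Ψ`, and outputs the next query of `Ψ` once they run out. -/
def compose (Φ Ψ : List ℕ →. Bool × ℕ) : List ℕ →. Bool × ℕ := fun l =>
  PFun.fix (composeStep Φ Ψ) (l.headI, [], false, (0, []), l.tail)

section Computability

open Primrec

private theorem primrec_input : Primrec fun s : ComposeState => s.1 := fst
private theorem primrec_answers : Primrec fun s : ComposeState => s.2.1 := fst.comp snd
private theorem primrec_running : Primrec fun s : ComposeState => s.2.2.1 := fst.comp (snd.comp snd)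
private theorem primrec_query : Primrec fun s : ComposeState => s.2.2.2.1.1 :=
  fst.comp (fst.comp (snd.comp (snd.comp snd)))
private theorem primrec_queryAnswers : Primrec fun s : ComposeState => s.2.2.2.1.2 :=
  snd.comp (fst.comp (snd.comp (snd.comp snd)))
private theorem primrec_rest : Primrec fun s : ComposeState => s.2.2.2.2 :=
  snd.comp (snd.comp (snd.comp snd))

theorem afterPhi_primrec : Primrec₂ afterPhi := by
  have h : Primrec fun p : ComposeState × (Bool × ℕ) => bif p.2.1 then Sum.inl p.2 else
      Sum.inr (p.1.1, p.1.2.1, true, (p.2.2, []), p.1.2.2.2.2) :=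
    Primrec.cond (fst.comp snd) (sumInl.comp snd)
      (sumInr.comp ((primrec_input.comp fst).pair ((primrec_answers.comp fst).pair
        ((const true).pair (((snd.comp snd).pair (const ([] : List ℕ))).pair
          (primrec_rest.comp fst))))))
  exact h.of_eq fun ⟨_, b, _⟩ => by cases b <;> rfl

theorem afterPsi_primrec : Primrec₂ afterPsi := by
  have h : Primrec fun p : ComposeState × (Bool × ℕ) =>
      bif p.2.1 then Sum.inr (p.1.1, p.1.2.1 ++ [p.2.2], false, (0, []), p.1.2.2.2.2) else
      bif decide (p.1.2.2.2.2 = []) then Sum.inl (false, p.2.2) else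
      Sum.inr (p.1.1, p.1.2.1, true, (p.1.2.2.2.1.1, p.1.2.2.2.1.2 ++ [p.1.2.2.2.2.headI]),
        p.1.2.2.2.2.tail) :=
    Primrec.cond (fst.comp snd)
      (sumInr.comp ((primrec_input.comp fst).pair
        ((list_concat.comp (primrec_answers.comp fst) (snd.comp snd)).pair
          ((const false).pair ((const ((0 : ℕ), ([] : List ℕ))).pair (primrec_rest.comp fst))))))
      (Primrec.cond (Primrec.eq.comp (primrec_rest.comp fst) (const ([] : List ℕ))).decide
        (sumInl.comp ((const false).pair (snd.comp snd)))
        (sumInr.comp ((primrec_input.comp fst).pair ((primrec_answers.comp fst).pair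
          ((const true).pair (((primrec_query.comp fst).pair
            (list_concat.comp (primrec_queryAnswers.comp fst)
              (list_headI.comp (primrec_rest.comp fst)))).pair
            (list_tail.comp (primrec_rest.comp fst))))))))
  exact h.of_eq fun ⟨⟨_, _, _, _, r⟩, b, _⟩ => by cases b <;> cases r <;> rfl

theorem composeStep_partrec {Φ Ψ : List ℕ →. Bool × ℕ} (hΦ : Partrec Φ) (hΨ : Partrec Ψ) :
    Partrec (composeStep Φ Ψ) :=
  Partrec.cond primrec_running.to_comp
    ((hΨ.comp (list_cons.comp primrec_query primrec_queryAnswers).to_comp).map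
      afterPsi_primrec.to_comp)
    ((hΦ.comp (list_cons.comp primrec_input primrec_answers).to_comp).map
      afterPhi_primrec.to_comp)

theorem compose_partrec {Φ Ψ : List ℕ →. Bool × ℕ} (hΦ : Partrec Φ) (hΨ : Partrec Ψ) :
    Partrec (compose Φ Ψ) :=
  (Partrec.fix (composeStep_partrec hΦ hΨ)).comp (list_headI.pair ((const ([] : List ℕ)).pair
    ((const false).pair ((const ((0 : ℕ), ([] : List ℕ))).pair list_tail)))).to_comp

end Computability

section Semantics

variable {Φ Ψ : List ℕ →. Bool × ℕ}

abbrev Reaches (Φ Ψ : List ℕ →. Bool × ℕ) : ComposeState → ComposeState → Prop :=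
  Relation.ReflTransGen fun s s' => Sum.inr s' ∈ composeStep Φ Ψ s

theorem afterPhi_mem_composeStep {n : ℕ} {as rest : List ℕ} {p : ℕ × List ℕ} {r : Bool × ℕ}
    (hr : r ∈ Φ (n :: as)) :
    afterPhi (n, as, false, p, rest) r ∈ composeStep Φ Ψ (n, as, false, p, rest) :=
  Part.mem_map _ hr

theorem afterPsi_mem_composeStep {n q : ℕ} {as bs rest : List ℕ} {r : Bool × ℕ}
    (hr : r ∈ Ψ (q :: bs)) :
    afterPsi (n, as, true, (q, bs), rest) r ∈ composeStep Φ Ψ (n, as, true, (q, bs), rest) :=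
  Part.mem_map _ hr

theorem compose_cons_eq {n : ℕ} {as : List ℕ} {s : ComposeState}
    (h : Reaches Φ Ψ (n, [], false, (0, []), as) s) :
    compose Φ Ψ (n :: as) = PFun.fix (composeStep Φ Ψ) s :=
  PFun.fix_eq_of_reflTransGen h

theorem reaches_of_validHist {K : ℕ →. ℕ} {n q : ℕ} {as bs cs : List ℕ}
    (hv : ValidHist Ψ K q (bs ++ cs)) (t : List ℕ) :
    Reaches Φ Ψ (n, as, true, (q, bs), cs ++ t) (n, as, true, (q, bs ++ cs), t) := by
  induction cs generalizing bs with
  | nil => simpa using .refl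
  | cons c cs ih =>
    obtain ⟨q', hq', -⟩ := (validHist_append_iff.1 hv).2 0 (by simp)
    refine .head (afterPsi_mem_composeStep (r := (false, q')) (by simpa using hq')) ?_
    simpa using ih (bs := bs ++ [c]) (by simpa using hv)

/-- Each answer `b` of `G` to a query of `Φ` is replaced by the history of a `Ψ`-computation of
`b` from `K`. -/
theorem exists_validHist_compose {G K : ℕ →. ℕ} (hG : Computes Ψ K G) {n : ℕ} {bs : List ℕ}
    (hv : ValidHist Φ G n bs) :
    ∃ as, ValidHist (compose Φ Ψ) K n as ∧
      ∀ t, Reaches Φ Ψ (n, [], false, (0, []), as ++ t) (n, bs, false, (0, []), t) := by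
  induction bs using List.reverseRecOn with
  | nil => exact ⟨[], fun _ h => absurd h (by simp), fun _ => .refl⟩
  | append_singleton bs b ih =>
    obtain ⟨hv, hb⟩ := validHist_append_iff.1 hv
    obtain ⟨q, hq, hbq⟩ := hb 0 (by simp)
    obtain ⟨as, has, hreach⟩ := ih hv
    obtain ⟨cs, hcs, hcb⟩ := hG q b hbq
    have hcall (t : List ℕ) :
        Reaches Φ Ψ (n, [], false, (0, []), as ++ t) (n, bs, true, (q, []), t) :=
      (hreach t).tail (afterPhi_mem_composeStep (r := (false, q)) (by simpa using hq))
    refine ⟨as ++ cs, validHist_append_iff.2 ⟨has, fun i hi => ?_⟩, fun t => ?_⟩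
    · obtain ⟨q', hq', hc⟩ := hcs i hi
      have hrun := (hcall _).trans (reaches_of_validHist (bs := []) (by simpa using hcs.take i) [])
      rw [List.append_nil] at hrun
      refine ⟨q', ?_, hc⟩
      rw [compose_cons_eq hrun]
      exact PFun.fix_stop (afterPsi_mem_composeStep hq')
    · have hrun := (hcall (cs ++ t)).trans (reaches_of_validHist (bs := []) (by simpa using hcs) t)
      simpa using hrun.tail (afterPsi_mem_composeStep (r := (true, b)) hcb)

end Semantics

theorem trans {f G K : ℕ →. ℕ} (h₁ : SubTuringLE f G) (h₂ : SubTuringLE G K) :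
    SubTuringLE f K := by
  obtain ⟨Φ, hΦ, hf⟩ := h₁
  obtain ⟨Ψ, hΨ, hG⟩ := h₂
  refine ⟨compose Φ Ψ, compose_partrec hΦ hΨ, fun n m hm => ?_⟩
  obtain ⟨bs, hbs, hend⟩ := hf n m hm
  obtain ⟨as, hval, hreach⟩ := exists_validHist_compose hG hbs
  refine ⟨as, hval, ?_⟩
  rw [compose_cons_eq (by simpa using hreach [])]
  exact PFun.fix_stop (afterPhi_mem_composeStep (r := (true, m)) hend)

end SubTuringLE

namespace SubTuring

/-- The `e`-th partial computable machine, acting on encodings. -/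
def codeMachine (e : ℕ) : List ℕ →. Bool × ℕ := fun l =>
  ((Denumerable.ofNat Nat.Partrec.Code e).eval (Encodable.encode l)).bind fun r =>
    Part.ofOption (Encodable.decode r)

theorem codeMachine_partrec (e : ℕ) : Partrec (codeMachine e) :=
  ((Nat.Partrec.Code.eval_part.comp (Computable.const _) Computable.id).comp
    Computable.encode).bind (Computable.ofOption (Computable.decode.comp Computable.snd)).to₂

theorem exists_codeMachine_eq {Φ : List ℕ →. Bool × ℕ} (hΦ : Partrec Φ) :
    ∃ e, codeMachine e = Φ := by
  obtain ⟨c, hc⟩ := Nat.Partrec.Code.exists_code.1 hΦ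
  refine ⟨Encodable.encode c, funext fun l => ?_⟩
  simp only [codeMachine, Denumerable.ofNat_encode, hc, Encodable.encodek, Part.coe_some,
    Part.bind_some, Part.bind_map, Part.bind_some_right]

/-- The oracle answering `g i x` on `⟪⟪p, i⟫, x⟫` when `S i p`, i.e. when the password `p`
unlocks column `i`. -/
def locked (g : ℕ → ℕ →. ℕ) (S : ℕ → ℕ → Prop) : ℕ →. ℕ := fun u =>
  if S u.unpair.1.unpair.2 u.unpair.1.unpair.1 then g u.unpair.1.unpair.2 u.unpair.2
  else Part.none

section Locked

variable {g : ℕ → ℕ →. ℕ} {S S' : ℕ → ℕ → Prop}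

theorem mem_locked {u a : ℕ} :
    a ∈ locked g S u ↔
      S u.unpair.1.unpair.2 u.unpair.1.unpair.1 ∧ a ∈ g u.unpair.1.unpair.2 u.unpair.2 := by
  unfold locked
  split_ifs with hS <;> simp [hS]

theorem locked_mono (h : ∀ i p, S i p → S' i p) (u : ℕ) : locked g S u ≤ locked g S' u :=
  fun _ ha => mem_locked.2 ⟨h _ _ (mem_locked.1 ha).1, (mem_locked.1 ha).2⟩

theorem subTuringLE_locked {i p : ℕ} (hS : S i p) : SubTuringLE (g i) (locked g S) :=
  .of_query (Nat.pair (Nat.pair p i)) (Primrec₂.natPair.comp (Primrec.const _) Primrec.id).to_comp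
    fun x => by simp [locked, hS]

theorem subTuringLE_locked_lt (hstep : ∀ n, SubTuringLE (g n) (g (n + 1))) (π : ℕ → ℕ) (k : ℕ) :
    SubTuringLE (locked g fun i p => i < k ∧ p = π i) (g k) := by
  induction k with
  | zero => exact (SubTuringLE.none _).of_le fun u a ha => by simp [mem_locked] at ha
  | succ k ih =>
    have hnew : Computable fun u : ℕ =>
        decide (u.unpair.1.unpair.2 = k ∧ u.unpair.1.unpair.1 = π k) :=
      (PrimrecPred.and
        (Primrec.eq.comp (Primrec.snd.comp (Primrec.unpair.comp (Primrec.fst.comp Primrec.unpair)))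
          (Primrec.const k))
        (Primrec.eq.comp (Primrec.fst.comp (Primrec.unpair.comp (Primrec.fst.comp Primrec.unpair)))
          (Primrec.const (π k)))).decide.to_comp
    have hcol : SubTuringLE (fun u => g k u.unpair.2) (g k) :=
      .of_query (fun u => u.unpair.2) (Computable.snd.comp Computable.unpair) fun _ => le_rfl
    refine ((SubTuringLE.cond hnew hcol ih).trans (hstep k)).of_le fun u a ha => ?_
    obtain ⟨⟨hlt, hp⟩, hg⟩ := mem_locked.1 ha
    rcases Nat.lt_succ_iff_lt_or_eq.1 hlt with hlt | rfl
    · have : ¬ (u.unpair.1.unpair.2 = k ∧ u.unpair.1.unpair.1 = π k) := fun h => by omega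
      simpa [this] using mem_locked.2 ⟨⟨hlt, hp⟩, hg⟩
    · simpa [hp] using hg

end Locked

/-- The forcing condition `(π, k, t)`: a column `i < k` is unlocked only by its password `π i`,
a column `i ≥ k` by any `p > t`, its password being still to be chosen above `t`. -/
def Unlocks (π : ℕ → ℕ) (k t i p : ℕ) : Prop := (i < k ∧ p = π i) ∨ (k ≤ i ∧ t < p)

theorem unlocks_update {π : ℕ → ℕ} {e t c i p : ℕ} (hc : t < c)
    (h : Unlocks (Function.update π e c) (e + 1) c i p) : Unlocks π e t i p := by
  rcases h with ⟨hi, hp⟩ | ⟨hi, hp⟩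
  · rcases Nat.lt_succ_iff_lt_or_eq.1 hi with hi | rfl
    · exact .inl ⟨hi, by rwa [Function.update_of_ne hi.ne] at hp⟩
    · exact .inr ⟨le_rfl, by simp_all⟩
  · exact .inr ⟨by omega, by omega⟩

section Stage

variable {g : ℕ → ℕ →. ℕ} {h : ℕ →. ℕ} {Φ : List ℕ →. Bool × ℕ} {π : ℕ → ℕ} {e t : ℕ}

theorem exists_blocking_password (hmax : Computes Φ (locked g (Unlocks π e t)) h)
    (hfix : ¬ Computes Φ (locked g fun i p => i < e ∧ p = π i) h) :
    ∃ c, t < c ∧ ¬ Computes Φ (locked g (Unlocks (Function.update π e c) (e + 1) c)) h := by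
  obtain ⟨n, m, hm, hn⟩ :
      ∃ n m, m ∈ h n ∧ ¬ HaltsTo Φ (locked g fun i p => i < e ∧ p = π i) n m := by
    simpa [Computes] using hfix
  obtain ⟨as, hv, hend⟩ := hmax n m hm
  obtain ⟨j, hj, q, hq, hfree⟩ : ∃ j, ∃ _ : j < as.length, ∃ q,
      (false, q) ∈ Φ (n :: as.take j) ∧
        ¬ (q.unpair.1.unpair.2 < e ∧ q.unpair.1.unpair.1 = π q.unpair.1.unpair.2) := by
    by_contra! hall
    refine hn ⟨as, fun k hk => ?_, hend⟩
    obtain ⟨q, hq, ha⟩ := hv k hk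
    exact ⟨q, hq, mem_locked.2 ⟨hall k hk q hq, (mem_locked.1 ha).2⟩⟩
  obtain ⟨q', hq', ha⟩ := hv j hj
  obtain rfl : q = q' := congrArg Prod.snd (Part.mem_unique hq hq')
  obtain ⟨hcol, hpw⟩ := ((mem_locked.1 ha).1).resolve_left hfree
  refine ⟨q.unpair.1.unpair.1 + 1, by omega, fun hc => ?_⟩
  refine not_haltsTo_of_query_notMem (locked_mono fun _ _ => unlocks_update (by omega)) hv hend
    hj hq (if_neg ?_) m (hc n m hm)
  rintro (⟨hi, hp⟩ | ⟨-, hp⟩)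
  · rw [show q.unpair.1.unpair.2 = e by omega, Function.update_self] at hp
    omega
  · omega

theorem exists_forcing_password (hstep : ∀ n, SubTuringLE (g n) (g (n + 1)))
    (hninc : ¬ SubTuringLE (g (e + 1)) (g e)) (hub : SubTuringLE (g (e + 1)) h)
    (hΦ : Partrec Φ) (t : ℕ) (π : ℕ → ℕ) :
    ∃ c, t < c ∧ ¬ Computes Φ (locked g (Unlocks (Function.update π e c) (e + 1) c)) h := by
  by_cases hmax : Computes Φ (locked g (Unlocks π e t)) h
  · refine exists_blocking_password hmax fun hfix => hninc ?_
    exact hub.trans <| SubTuringLE.trans ⟨Φ, hΦ, hfix⟩ (subTuringLE_locked_lt hstep π e)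
  · exact ⟨t + 1, by omega, fun hc =>
      hmax (hc.mono (locked_mono fun _ _ => unlocks_update (by omega)))⟩

end Stage

/-- Stage `e` of the construction: the condition `Unlocks π e t` as the pair `(t, π)`. -/
def forcingSeq (C : ℕ → ℕ → (ℕ → ℕ) → ℕ) : ℕ → ℕ × (ℕ → ℕ)
  | 0 => (0, fun _ => 0)
  | e + 1 =>
    let s := forcingSeq C e
    (C e s.1 s.2, Function.update s.2 e (C e s.1 s.2))

def limitPassword (C : ℕ → ℕ → (ℕ → ℕ) → ℕ) (i : ℕ) : ℕ := (forcingSeq C (i + 1)).2 i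

section Construction

variable {C : ℕ → ℕ → (ℕ → ℕ) → ℕ}

theorem limitPassword_eq (i : ℕ) : limitPassword C i = (forcingSeq C (i + 1)).1 := by
  simp [limitPassword, forcingSeq]

theorem forcingSeq_snd_of_lt {i e : ℕ} (hi : i < e) : (forcingSeq C e).2 i = limitPassword C i := by
  induction e with
  | zero => omega
  | succ e ih =>
    rcases Nat.lt_succ_iff_lt_or_eq.1 hi with hi | rfl
    · simp [forcingSeq, Function.update_of_ne hi.ne, ih hi]
    · rfl

theorem unlocks_limitPassword (hC : ∀ e t π, t < C e t π) (e i : ℕ) :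
    Unlocks (forcingSeq C e).2 e (forcingSeq C e).1 i (limitPassword C i) := by
  rcases Nat.lt_or_ge i e with hi | hi
  · exact .inl ⟨hi, (forcingSeq_snd_of_lt hi).symm⟩
  · have hmono : StrictMono fun e => (forcingSeq C e).1 :=
      strictMono_nat_of_lt_succ fun e => hC e _ _
    exact .inr ⟨hi, limitPassword_eq i ▸ hmono (Nat.lt_succ_of_le hi)⟩

end Construction

end SubTuring

open SubTuring

theorem no_sup_of_strictly_increasing (g : ℕ → ℕ →. ℕ) (h : ℕ →. ℕ)
    (hinc : ∀ n, SubTuringLE (g n) (g (n + 1)) ∧ ¬ SubTuringLE (g (n + 1)) (g n))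
    (hub : ∀ n, SubTuringLE (g n) h) :
    ∃ f : ℕ →. ℕ, (∀ n, SubTuringLE (g n) f) ∧ ¬ SubTuringLE h f := by
  choose C hC hforce using fun e => exists_forcing_password (fun n => (hinc n).1) (hinc e).2
    (hub (e + 1)) (codeMachine_partrec e)
  refine ⟨locked g fun i p => p = limitPassword C i, fun n => subTuringLE_locked rfl, ?_⟩
  rintro ⟨Φ, hΦ, hcomp⟩
  obtain ⟨e, rfl⟩ := exists_codeMachine_eq hΦ
  exact hforce e _ _ <| Computes.mono
    (locked_mono fun i _ hp => hp ▸ unlocks_limitPassword hC (e + 1) i) hcomp
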